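/- arXiv:1010.3044 — 6 statements merged into one kernel-verified Lean document; each statement's English description precedes it below -/
import Mathlib

section
/- Let 0 < ε < 1 and let φ* ∈ (0, π/2) satisfy φ*·tan φ* = (1/2)|log ε|. Then as ε → 0⁺, 2·sin φ* = 2 - π²/(log ε)² + o(1/(log ε)²). -/
/-!
Write `L = |log ε|`, so that `L = 2 φ tan φ`. Since `cos² = (1 - sin)(1 + sin)`,
`(2 sin φ - 2) L² = -8 φ² sin² φ / (1 + sin φ)`. As `ε → 0⁺` we have `L → ∞`, which forces
`tan φ → ∞` and so `φ → π/2`; the right-hand side then tends to `-8 (π/2)² / 2 = -π²`.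
-/

open Real Set Filter Asymptotics
open scoped Topology

lemma tendsto_pi_div_two_of_mul_tan_tendsto_atTop {α : Type*} {l : Filter α} {φ : α → ℝ}
    (hφ : ∀ᶠ x in l, φ x ∈ Ioo 0 (π / 2))
    (h : Tendsto (fun x => φ x * tan (φ x)) l atTop) : Tendsto φ l (𝓝 (π / 2)) := by
  have htan : Tendsto (fun x => tan (φ x)) l atTop := by
    refine tendsto_atTop_mono' l ?_ (h.atTop_div_const (by positivity : (0:ℝ) < π / 2))
    filter_upwards [hφ] with x ⟨h0, h1⟩
    have : 0 < tan (φ x) := tan_pos_of_pos_of_lt_pi_div_two h0 h1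
    rw [div_le_iff₀ (by positivity)]
    nlinarith
  refine (tendsto_nhdsWithin_iff.mp (tendsto_arctan_atTop.comp htan)).1.congr' ?_
  filter_upwards [hφ] with x ⟨h0, h1⟩
  exact arctan_tan (by linarith) h1

lemma two_mul_sin_sub_two_mul_sq_of_mul_tan_eq {φ L : ℝ} (hφ : cos φ ≠ 0)
    (h : φ * tan φ = L / 2) :
    (2 * sin φ - 2) * L ^ 2 = -(8 * φ ^ 2 * sin φ ^ 2 / (1 + sin φ)) := by
  have hcos_sq : cos φ ^ 2 = (1 - sin φ) * (1 + sin φ) := by rw [cos_sq']; ring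
  have hsin : 1 + sin φ ≠ 0 := fun h0 => hφ (by simpa [h0] using hcos_sq)
  obtain rfl : L = 2 * φ * (sin φ / cos φ) := by rw [← tan_eq_sin_div_cos]; linarith
  field_simp
  rw [hcos_sq]
  ring

lemma tendsto_pi_sq_sub_mul_sin_sq_div_one_add_sin :
    Tendsto (fun x => π ^ 2 - 8 * x ^ 2 * sin x ^ 2 / (1 + sin x)) (𝓝 (π / 2)) (𝓝 0) := by
  have hcont : ContinuousAt (fun x => π ^ 2 - 8 * x ^ 2 * sin x ^ 2 / (1 + sin x)) (π / 2) := by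
    fun_prop (disch := norm_num)
  convert hcont.tendsto using 2
  norm_num
  ring

theorem speed_asymptotics_eps_to_zero (φ : ℝ → ℝ)
    (hφ : ∀ ε : ℝ, 0 < ε → ε < 1 →
      φ ε ∈ Ioo 0 (π / 2) ∧ φ ε * Real.tan (φ ε) = (1 / 2) * |Real.log ε|) :
    (fun ε : ℝ => 2 * Real.sin (φ ε) - (2 - π ^ 2 / (Real.log ε) ^ 2))
      =o[nhdsWithin 0 (Ioo 0 1)] (fun ε : ℝ => 1 / (Real.log ε) ^ 2) := by
  have hmem : ∀ᶠ ε in 𝓝[Ioo 0 1] (0 : ℝ), ε ∈ Ioo 0 1 := self_mem_nhdsWithin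
  have hlog_ne : ∀ᶠ ε in 𝓝[Ioo 0 1] (0 : ℝ), log ε ≠ 0 := by
    filter_upwards [hmem] with ε hε using (log_neg hε.1 hε.2).ne
  have hφ_lim : Tendsto φ (𝓝[Ioo 0 1] 0) (𝓝 (π / 2)) := by
    have habs_log : Tendsto (fun ε => |log ε|) (𝓝[Ioo 0 1] 0) atTop :=
      tendsto_abs_atBot_atTop.comp <|
        tendsto_log_nhdsGT_zero.mono_left (nhdsWithin_mono _ fun _ h => h.1)
    refine tendsto_pi_div_two_of_mul_tan_tendsto_atTop ?_ ?_
    · filter_upwards [hmem] with ε hε using (hφ ε hε.1 hε.2).1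
    · refine (habs_log.const_mul_atTop one_half_pos).congr' ?_
      filter_upwards [hmem] with ε hε using (hφ ε hε.1 hε.2).2.symm
  rw [isLittleO_iff_tendsto' (hlog_ne.mono fun ε h h0 => absurd h0 (by positivity))]
  refine (tendsto_pi_sq_sub_mul_sin_sq_div_one_add_sin.comp hφ_lim).congr' ?_
  filter_upwards [hmem, hlog_ne] with ε hε hlog
  obtain ⟨⟨h0, h1⟩, htan⟩ := hφ ε hε.1 hε.2
  have hcos : cos (φ ε) ≠ 0 := (cos_pos_of_mem_Ioo ⟨by linarith, h1⟩).ne'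
  have key := two_mul_sin_sub_two_mul_sq_of_mul_tan_eq hcos (by rw [htan]; ring)
  rw [sq_abs] at key
  calc π ^ 2 - 8 * φ ε ^ 2 * sin (φ ε) ^ 2 / (1 + sin (φ ε))
      = (2 * sin (φ ε) - 2) * log ε ^ 2 + π ^ 2 := by rw [key]; ring
    _ = _ := by field_simp; ring
end

section
/- Let 0 < ε < 1 and let φ* ∈ (0, π/2) satisfy φ*·tan φ* = (1/2)|log ε|. Then as ε → 1⁻, 2·sin φ* / √(2(1-ε)) → 1. -/
open Real Set Filter

theorem speed_asymptotics_eps_to_one (φ : ℝ → ℝ)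
    (hφ : ∀ ε : ℝ, 0 < ε → ε < 1 →
      φ ε ∈ Ioo 0 (π / 2) ∧ φ ε * Real.tan (φ ε) = (1 / 2) * |Real.log ε|) :
    Tendsto (fun ε : ℝ => 2 * Real.sin (φ ε) / Real.sqrt (2 * (1 - ε)))
      (nhdsWithin 1 (Ioo 0 1)) (nhds 1) := by
  set l := nhdsWithin (1:ℝ) (Ioo 0 1) with hl
  have hmem : ∀ᶠ ε in l, ε ∈ Ioo (0:ℝ) 1 := self_mem_nhdsWithin
  -- |log ε| → 0
  have hlog0 : Tendsto (fun ε : ℝ => |Real.log ε|) l (nhds 0) := by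
    have h1 : Tendsto Real.log l (nhds 0) := by
      have := (Real.continuousAt_log (by norm_num : (1:ℝ) ≠ 0)).tendsto
      rw [Real.log_one] at this
      exact this.mono_left nhdsWithin_le_nhds
    simpa using h1.abs
  -- φ ε → 0 within Ioi 0
  have hφ0 : Tendsto (fun ε => φ ε) l (nhdsWithin 0 (Ioi 0)) := by
    rw [tendsto_nhdsWithin_iff]
    refine ⟨?_, hmem.mono fun ε hε => (hφ ε hε.1 hε.2).1.1⟩
    have hsq : Tendsto (fun ε : ℝ => Real.sqrt ((1/2) * |Real.log ε|)) l (nhds 0) := by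
      have h := hlog0.const_mul (1/2 : ℝ)
      rw [mul_zero] at h
      have h2 := (Real.continuous_sqrt.tendsto 0).comp h
      simp only [Function.comp_def, Real.sqrt_zero] at h2
      exact h2
    refine squeeze_zero' (hmem.mono fun ε hε => (hφ ε hε.1 hε.2).1.1.le)
      (hmem.mono fun ε hε => ?_) hsq
    obtain ⟨⟨h0, h2⟩, heq⟩ := hφ ε hε.1 hε.2
    refine Real.le_sqrt_of_sq_le ?_
    rw [← heq, sq]
    exact mul_le_mul_of_nonneg_left (Real.lt_tan h0 h2).le h0.le
  -- sin x * cos x / x → 1 as x → 0+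
  have hA : Tendsto (fun x : ℝ => Real.sin x * Real.cos x / x)
      (nhdsWithin 0 (Ioi 0)) (nhds 1) := by
    have hsin : Tendsto (fun x : ℝ => Real.sin x / x) (nhdsWithin 0 (Ioi 0)) (nhds 1) := by
      have := (hasDerivAt_sin 0)
      rw [hasDerivAt_iff_tendsto_slope] at this
      have h2 := this.mono_left (nhdsWithin_mono _ (fun x hx => ne_of_gt hx : Ioi (0:ℝ) ⊆ {0}ᶜ))
      simp only [Real.cos_zero] at h2
      refine h2.congr fun x => ?_
      simp [slope_def_field, div_eq_mul_inv, mul_comm]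
    have hcos : Tendsto (fun x : ℝ => Real.cos x) (nhdsWithin 0 (Ioi 0)) (nhds 1) := by
      have := (Real.continuous_cos.tendsto 0).mono_left (nhdsWithin_le_nhds (s := Ioi (0:ℝ)))
      simpa using this
    have := hsin.mul hcos
    simp only [one_mul] at this
    refine this.congr fun x => by ring
  have hAφ : Tendsto (fun ε => Real.sin (φ ε) * Real.cos (φ ε) / φ ε) l (nhds 1) :=
    hA.comp hφ0
  -- log ε / (ε - 1) → 1
  have hB : Tendsto (fun ε : ℝ => Real.log ε / (ε - 1)) l (nhds 1) := by
    have := (Real.hasDerivAt_log (by norm_num : (1:ℝ) ≠ 0))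
    rw [hasDerivAt_iff_tendsto_slope] at this
    have h2 := this.mono_left (nhdsWithin_mono _ (fun x hx => ne_of_lt hx.2 : Ioo (0:ℝ) 1 ⊆ {1}ᶜ))
    simp only [inv_one] at h2
    refine (h2.congr fun x => ?_)
    simp [slope_def_field, Real.log_one, div_eq_mul_inv, mul_comm]
  -- combine
  have key : Tendsto (fun ε : ℝ => Real.sqrt
      ((Real.log ε / (ε - 1)) * (Real.sin (φ ε) * Real.cos (φ ε) / φ ε))) l (nhds 1) := by
    have hm := hB.mul hAφ
    rw [mul_one] at hm
    have h2 := (Real.continuous_sqrt.tendsto 1).comp hm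
    simp only [Function.comp_def, Real.sqrt_one] at h2
    exact h2
  refine key.congr' (hmem.mono fun ε hε => ?_)
  obtain ⟨⟨h0, h2⟩, heq⟩ := hφ ε hε.1 hε.2
  have hcos : 0 < Real.cos (φ ε) := Real.cos_pos_of_mem_Ioo ⟨by linarith [Real.pi_pos], h2⟩
  have hsin : 0 < Real.sin (φ ε) := Real.sin_pos_of_pos_of_lt_pi h0 (by linarith [Real.pi_pos])
  have h1ε : (0:ℝ) < 1 - ε := by linarith [hε.2]
  have hlogneg : Real.log ε < 0 := Real.log_neg hε.1 hε.2
  have habs : |Real.log ε| = -Real.log ε := abs_of_neg hlogneg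
  rw [habs, Real.tan_eq_sin_div_cos] at heq
  -- show sqrt (B*A) = ratio
  have hratio_nonneg : 0 ≤ 2 * Real.sin (φ ε) / Real.sqrt (2 * (1 - ε)) := by
    positivity
  have hsq : (2 * Real.sin (φ ε) / Real.sqrt (2 * (1 - ε)))^2 =
      (Real.log ε / (ε - 1)) * (Real.sin (φ ε) * Real.cos (φ ε) / φ ε) := by
    rw [div_pow, Real.sq_sqrt (by linarith : (0:ℝ) ≤ 2 * (1 - ε))]
    have hφlog : Real.log ε = -2 * (φ ε * (Real.sin (φ ε) / Real.cos (φ ε))) := by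
      linarith [heq]
    have hφne : φ ε ≠ 0 := ne_of_gt h0
    have hcne : Real.cos (φ ε) ≠ 0 := ne_of_gt hcos
    have hεne : ε - 1 ≠ 0 := by linarith
    rw [hφlog]
    field_simp
    ring
  rw [← hsq, Real.sqrt_sq hratio_nonneg]
end

section
/- Let 0 < ε < 1. Define G(u) = (1/2)·(∫₀^∞ [u(s)² - ε²]₊ / s² ds) / (∫₀^∞ u'(s)² ds) for u : [0,∞) → [0,1] increasing, absolutely continuous, with u(0)=0 and lim_{s→∞} u(s)=1, both integrals finite and the denominator positive. Then G(u) ≤ 2(1-ε²)/(1+ε²)². -/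
/-!
Let `a > 0` be the point where `u` crosses `ε`, so that the numerator is
`N = ∫_a^∞ (u² - ε²)/s²`. Cauchy–Schwarz on `(0, a]` gives `∫_0^a u'² ≥ ε²/a`. On `(a, ∞)`,
writing `u(s)² - ε² = 2∫_a^s u u'` and exchanging the order of integration gives
`N = 2∫_a^∞ u u'/t`, so Cauchy–Schwarz yields `N² ≤ 4 (∫_a^∞ u'²) (N + ε²/a)`. Since `u ≤ 1`,
also `N ≤ (1 - ε²)/a`, and the quotient is largest when `N = (1 - ε²)/a`, where it equals
`2(1 - ε²)/(1 + ε²)²`.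
-/

open Real Set MeasureTheory Filter

theorem mul_rpow_neg_two {s : ℝ} (hs : 0 < s) (c : ℝ) : c * s ^ (-2 : ℝ) = c / s ^ 2 := by
  rw [rpow_neg hs.le, rpow_two, div_eq_mul_inv]

theorem integrableOn_Ioi_div_sq {t : ℝ} (ht : 0 < t) (c : ℝ) :
    IntegrableOn (fun s => c / s ^ 2) (Ioi t) :=
  IntegrableOn.congr_fun ((integrableOn_Ioi_rpow_of_lt (by norm_num) ht).const_mul c)
    (fun s hs => mul_rpow_neg_two (ht.trans hs) c) measurableSet_Ioi

theorem integral_Ioi_div_sq {t : ℝ} (ht : 0 < t) (c : ℝ) :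
    ∫ s in Ioi t, c / s ^ 2 = c / t := by
  rw [← setIntegral_congr_fun measurableSet_Ioi fun s hs => mul_rpow_neg_two (ht.trans hs) c,
    integral_const_mul, integral_Ioi_rpow_of_lt (by norm_num) ht]
  norm_num [rpow_neg_one, div_eq_mul_inv]

theorem setIntegral_Ioi_div_sq_le {f : ℝ → ℝ} {a M : ℝ} (ha : 0 < a)
    (hf : ∀ s ∈ Ioi a, 0 ≤ f s ∧ f s ≤ M) :
    ∫ s in Ioi a, f s / s ^ 2 ≤ M / a := by
  rw [← integral_Ioi_div_sq ha]
  refine integral_mono_of_nonneg ?_ (integrableOn_Ioi_div_sq ha M) ?_ <;>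
    filter_upwards [ae_restrict_mem measurableSet_Ioi] with s hs
  · exact div_nonneg (hf s hs).1 (sq_nonneg s)
  · exact div_le_div_of_nonneg_right (hf s hs).2 (sq_nonneg s)

theorem setIntegral_Ioi_max_div_sq {f : ℝ → ℝ} {a : ℝ} (ha : 0 ≤ a)
    (hle : ∀ s ∈ Ioc 0 a, f s ≤ 0) (hge : ∀ s ∈ Ioi a, 0 ≤ f s) :
    ∫ s in Ioi 0, max (f s) 0 / s ^ 2 = ∫ s in Ioi a, f s / s ^ 2 := by
  calc ∫ s in Ioi 0, max (f s) 0 / s ^ 2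
      = ∫ s in Ioi 0, (Ioi a).indicator (fun s => f s / s ^ 2) s :=
        setIntegral_congr_fun measurableSet_Ioi fun s (hs : 0 < s) => by
          by_cases has : s ∈ Ioi a
          · rw [indicator_of_mem has, max_eq_left (hge s has)]
          · rw [indicator_of_notMem has, max_eq_right (hle s ⟨hs, not_lt.1 has⟩), zero_div]
    _ = ∫ s in Ioi a, f s / s ^ 2 := by
        rw [integral_indicator measurableSet_Ioi, Measure.restrict_restrict measurableSet_Ioi,
          inter_eq_left.2 (Ioi_subset_Ioi ha)]

theorem sq_integral_mul_le {α : Type*} [MeasurableSpace α] {μ : Measure α} {f g : α → ℝ}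
    (hf : MemLp f 2 μ) (hg : MemLp g 2 μ) :
    (∫ x, f x * g x ∂μ) ^ 2 ≤ (∫ x, f x ^ 2 ∂μ) * ∫ x, g x ^ 2 ∂μ := by
  have hfg : Integrable (fun x => f x * g x) μ := hf.integrable_mul hg
  have hquad : ∀ c : ℝ,
      0 ≤ (∫ x, f x ^ 2 ∂μ) * (c * c) + (-2 * ∫ x, f x * g x ∂μ) * c + ∫ x, g x ^ 2 ∂μ := by
    intro c
    have hexp : (fun x => (c * f x - g x) ^ 2)
        = fun x => c ^ 2 * f x ^ 2 - 2 * c * (f x * g x) + g x ^ 2 := by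
      funext x; ring
    have h : 0 ≤ ∫ x, (c * f x - g x) ^ 2 ∂μ := integral_nonneg fun x => sq_nonneg _
    have hint : Integrable (fun x => c ^ 2 * f x ^ 2 - 2 * c * (f x * g x)) μ :=
      (hf.integrable_sq.const_mul _).sub (hfg.const_mul _)
    rw [hexp, integral_add hint hg.integrable_sq,
      integral_sub (hf.integrable_sq.const_mul _) (hfg.const_mul _), integral_const_mul,
      integral_const_mul] at h
    linarith
  have := discrim_le_zero hquad
  rw [discrim] at this
  linarith

theorem sq_integral_le_measureReal_mul_integral_sq {α : Type*} [MeasurableSpace α]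
    {μ : Measure α} [IsFiniteMeasure μ] {f : α → ℝ} (hf : MemLp f 2 μ) :
    (∫ x, f x ∂μ) ^ 2 ≤ μ.real univ * ∫ x, f x ^ 2 ∂μ := by
  simpa [mul_comm] using sq_integral_mul_le hf (memLp_const (1 : ℝ))

theorem sq_intervalIntegral_div_le_setIntegral_sq {f : ℝ → ℝ} {a b : ℝ} (hab : a < b)
    (hf : MemLp f 2 (volume.restrict (Ioc a b))) :
    (∫ t in a..b, f t) ^ 2 / (b - a) ≤ ∫ t in Ioc a b, f t ^ 2 := by
  have h := sq_integral_le_measureReal_mul_integral_sq hf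
  rw [measureReal_restrict_apply_univ, Real.volume_real_Ioc_of_le hab.le] at h
  rw [intervalIntegral.integral_of_le hab.le, div_le_iff₀ (sub_pos.2 hab)]
  linarith

theorem sq_intervalIntegral_div_add_setIntegral_Ioi_le {f : ℝ → ℝ} {a : ℝ} (ha : 0 < a)
    (hf : MemLp f 2 (volume.restrict (Ioi 0))) :
    (∫ t in 0..a, f t) ^ 2 / a + ∫ t in Ioi a, f t ^ 2 ≤ ∫ t in Ioi 0, f t ^ 2 := by
  have hE := sq_intervalIntegral_div_le_setIntegral_sq ha
    (hf.mono_measure (Measure.restrict_mono Ioc_subset_Ioi_self le_rfl))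
  rw [sub_zero] at hE
  have hf2 : IntegrableOn (fun t => f t ^ 2) (Ioi 0) := hf.integrable_sq
  rw [← Ioc_union_Ioi_eq_Ioi ha.le, setIntegral_union (Ioc_disjoint_Ioi le_rfl) measurableSet_Ioi
    (hf2.mono_set Ioc_subset_Ioi_self) (hf2.mono_set (Ioi_subset_Ioi ha.le))]
  linarith

theorem aestronglyMeasurable_restrict_Ioi {f : ℝ → ℝ} {a : ℝ}
    (hf : ∀ b, a < b → IntervalIntegrable f volume a b) :
    AEStronglyMeasurable f (volume.restrict (Ioi a)) := by
  have hU : Ioi a = ⋃ n : ℕ, Ioc a (a + (n + 1)) := by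
    ext x
    simp only [mem_Ioi, mem_iUnion, mem_Ioc]
    refine ⟨fun hx => ?_, fun ⟨_, hx, _⟩ => hx⟩
    obtain ⟨n, hn⟩ := exists_nat_ge (x - a)
    exact ⟨n, hx, by linarith⟩
  rw [hU, aestronglyMeasurable_iUnion_iff]
  exact fun n => (hf _ (by linarith)).1.aestronglyMeasurable

theorem continuousOn_Icc_of_sub_eq_integral {u u' : ℝ → ℝ} {a b : ℝ} (hab : a ≤ b)
    (hu' : IntervalIntegrable u' volume a b) (hu : ∀ x ∈ Icc a b, u x - u a = ∫ t in a..x, u' t) :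
    ContinuousOn u (Icc a b) := by
  have hP := (hu'.absolutelyContinuousOnInterval_intervalIntegral left_mem_uIcc).continuousOn
  rw [uIcc_of_le hab] at hP
  exact (continuousOn_const.add hP).congr fun x hx => eq_add_of_sub_eq' (hu x hx)

theorem integral_two_mul_mul_eq_sq_sub_sq {f g : ℝ → ℝ} {a b : ℝ} (hab : a ≤ b)
    (hf : IntervalIntegrable f volume a b) (hg : ∀ x ∈ Icc a b, g x - g a = ∫ t in a..x, f t) :
    ∫ x in a..b, 2 * g x * f x = g b ^ 2 - g a ^ 2 := by
  set G : ℝ → ℝ := fun x => g a + ∫ t in a..x, f t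
  have hG : AbsolutelyContinuousOnInterval G a b :=
    (LipschitzWith.const (g a)).lipschitzOnWith.absolutelyContinuousOnInterval.add
      (hf.absolutelyContinuousOnInterval_intervalIntegral left_mem_uIcc)
  have hGg : ∀ x ∈ Icc a b, G x = g x := fun x hx => (eq_add_of_sub_eq' (hg x hx)).symm
  rw [← hGg b (right_mem_Icc.2 hab), ← hGg a (left_mem_Icc.2 hab), sq, sq,
    ← hG.integral_deriv_mul_eq_sub hG]
  refine intervalIntegral.integral_congr_ae ?_
  filter_upwards [hf.ae_hasDerivAt_integral] with x hderiv hx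
  have hxI : x ∈ Icc a b := by
    rw [uIoc_of_le hab] at hx; exact Ioc_subset_Icc_self hx
  have hGx : deriv G x = f x :=
    ((hderiv (uIoc_subset_uIcc hx) a left_mem_uIcc).const_add (g a)).deriv
  rw [hGx, hGg x hxI]
  ring

theorem setIntegral_Ioi_integral_Ioc_div_sq {a : ℝ} (ha : 0 < a) {φ : ℝ → ℝ}
    (hφ : IntegrableOn (fun t => φ t / t) (Ioi a)) :
    ∫ s in Ioi a, (∫ t in Ioc a s, φ t) / s ^ 2 = ∫ t in Ioi a, φ t / t := by
  set μ := volume.restrict (Ioi a)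
  set F : ℝ × ℝ → ℝ := {p | p.1 ≤ p.2}.indicator fun p => φ p.1 / p.2 ^ 2
  have hφm : AEStronglyMeasurable φ μ := by
    refine (hφ.1.mul aestronglyMeasurable_id).congr ?_
    filter_upwards [ae_restrict_mem measurableSet_Ioi] with t ht
    simp [div_mul_cancel₀ _ (ha.trans ht).ne']
  have hFm : AEStronglyMeasurable F (μ.prod μ) :=
    (hφm.comp_fst.div₀ (measurable_snd.pow_const 2).aestronglyMeasurable).indicator
      (measurableSet_le measurable_fst measurable_snd)
  have hsection : ∀ t ∈ Ioi a, ∀ c : ℝ, Integrable ((Ici t).indicator fun s => c / s ^ 2) μ ∧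
      ∫ s, (Ici t).indicator (fun s => c / s ^ 2) s ∂μ = c / t := by
    intro t ht c
    have ht0 : 0 < t := ha.trans ht
    have hIci : Ici t ∩ Ioi a = Ici t := inter_eq_left.2 (Ici_subset_Ioi.2 ht)
    refine ⟨?_, ?_⟩
    · rw [integrable_indicator_iff measurableSet_Ici, IntegrableOn,
        Measure.restrict_restrict measurableSet_Ici, hIci]
      exact (integrableOn_Ici_iff_integrableOn_Ioi).2 (integrableOn_Ioi_div_sq ht0 c)
    · rw [integral_indicator measurableSet_Ici, Measure.restrict_restrict measurableSet_Ici,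
        hIci, integral_Ici_eq_integral_Ioi, integral_Ioi_div_sq ht0]
  have hFt : ∀ t, (fun s => F (t, s)) = (Ici t).indicator fun s => φ t / s ^ 2 := by
    intro t; ext s; by_cases hs : t ≤ s <;> simp [F, indicator, hs]
  have hFs : ∀ s, (fun t => F (t, s)) = (Iic s).indicator fun t => φ t / s ^ 2 := by
    intro s; ext t; by_cases hs : t ≤ s <;> simp [F, indicator, hs]
  have hFint : Integrable F (μ.prod μ) := by
    rw [integrable_prod_iff hFm]
    refine ⟨ae_restrict_of_forall_mem measurableSet_Ioi fun t ht => ?_, ?_⟩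
    · rw [hFt]; exact (hsection t ht _).1
    refine hφ.norm.congr (ae_restrict_of_forall_mem measurableSet_Ioi fun t ht => ?_)
    have hnorm : (fun s => ‖F (t, s)‖)
        = (Ici t).indicator fun s => ‖φ t‖ / s ^ 2 := by
      ext s; by_cases hs : t ≤ s <;> simp [F, indicator, hs, norm_div]
    simp only [hnorm, (hsection t ht _).2, norm_div, Real.norm_of_nonneg (ha.trans ht).le]
  calc ∫ s in Ioi a, (∫ t in Ioc a s, φ t) / s ^ 2 = ∫ s, ∫ t, F (t, s) ∂μ ∂μ := by
        refine setIntegral_congr_fun measurableSet_Ioi fun s _ => ?_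
        rw [hFs, integral_indicator measurableSet_Iic,
          Measure.restrict_restrict measurableSet_Iic, Iic_inter_Ioi, integral_div]
    _ = ∫ t, ∫ s, F (t, s) ∂μ ∂μ :=
        (integral_integral_swap (f := fun t s => F (t, s)) hFint).symm
    _ = ∫ t in Ioi a, φ t / t := by
        refine setIntegral_congr_fun measurableSet_Ioi fun t ht => ?_
        rw [hFt, (hsection t ht _).2]

theorem intervalIntegrable_of_memLp_restrict_Ioi {f : ℝ → ℝ} {a b : ℝ} (hab : a ≤ b)
    (hf : MemLp f 2 (volume.restrict (Ioi a))) : IntervalIntegrable f volume a b :=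
  (intervalIntegrable_iff_integrableOn_Ioc_of_le hab).2
    ((hf.mono_measure (Measure.restrict_mono Ioc_subset_Ioi_self le_rfl)).integrable one_le_two)

theorem memLp_div_restrict_Ioi {u u' : ℝ → ℝ} {a C : ℝ} (ha : 0 < a)
    (hu : ∀ s, a ≤ s → u s - u a = ∫ t in a..s, u' t)
    (hu' : MemLp u' 2 (volume.restrict (Ioi a))) (hC : ∀ s, a < s → |u s| ≤ C) :
    MemLp (fun t => u t / t) 2 (volume.restrict (Ioi a)) := by
  have hum : AEStronglyMeasurable u (volume.restrict (Ioi a)) :=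
    aestronglyMeasurable_restrict_Ioi fun s has =>
      (continuousOn_Icc_of_sub_eq_integral has.le (intervalIntegrable_of_memLp_restrict_Ioi
        has.le hu') fun x hx => hu x hx.1).intervalIntegrable_of_Icc has.le
  have hCt : MemLp (fun t => C / t) 2 (volume.restrict (Ioi a)) :=
    (memLp_two_iff_integrable_sq (measurable_const.div measurable_id).aestronglyMeasurable).2
      ((integrableOn_Ioi_div_sq ha (C ^ 2)).congr_fun (fun t _ => (div_pow C t 2).symm)
        measurableSet_Ioi)
  refine hCt.of_le (hum.div₀ aestronglyMeasurable_id) ?_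
  filter_upwards [ae_restrict_mem measurableSet_Ioi] with t ht
  have ht0 : 0 < t := ha.trans ht
  rw [norm_div, norm_div, Real.norm_of_nonneg ht0.le, Real.norm_eq_abs, Real.norm_eq_abs]
  exact div_le_div_of_nonneg_right ((hC t ht).trans (le_abs_self C)) ht0.le

theorem setIntegral_Ioi_sq_sub_div_sq_eq {u u' : ℝ → ℝ} {a : ℝ} (ha : 0 < a)
    (hu : ∀ s, a ≤ s → u s - u a = ∫ t in a..s, u' t)
    (hu' : MemLp u' 2 (volume.restrict (Ioi a)))
    (hv : MemLp (fun t => u t / t) 2 (volume.restrict (Ioi a))) :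
    ∫ s in Ioi a, (u s ^ 2 - u a ^ 2) / s ^ 2 = 2 * ∫ t in Ioi a, u' t * (u t / t) := by
  have hφ : IntegrableOn (fun t => 2 * u t * u' t / t) (Ioi a) :=
    ((hu'.integrable_mul hv).const_mul 2).congr
      (Eventually.of_forall fun t => by simp only [Pi.mul_apply]; ring)
  calc ∫ s in Ioi a, (u s ^ 2 - u a ^ 2) / s ^ 2
      = ∫ s in Ioi a, (∫ t in Ioc a s, 2 * u t * u' t) / s ^ 2 :=
        setIntegral_congr_fun measurableSet_Ioi fun s (hs : a < s) => by
          rw [← intervalIntegral.integral_of_le hs.le, integral_two_mul_mul_eq_sq_sub_sq hs.le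
            (intervalIntegrable_of_memLp_restrict_Ioi hs.le hu') fun x hx => hu x hx.1]
    _ = ∫ t in Ioi a, 2 * u t * u' t / t := setIntegral_Ioi_integral_Ioc_div_sq ha hφ
    _ = 2 * ∫ t in Ioi a, u' t * (u t / t) := by
        rw [← integral_const_mul]; congr 1; ext t; ring

theorem sq_setIntegral_Ioi_sq_sub_div_sq_le_four_mul {u u' : ℝ → ℝ} {a C : ℝ} (ha : 0 < a)
    (hu : ∀ s, a ≤ s → u s - u a = ∫ t in a..s, u' t)
    (hu' : MemLp u' 2 (volume.restrict (Ioi a))) (hC : ∀ s, a < s → |u s| ≤ C) :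
    (∫ s in Ioi a, (u s ^ 2 - u a ^ 2) / s ^ 2) ^ 2 ≤
      4 * (∫ s in Ioi a, u' s ^ 2) *
        ((∫ s in Ioi a, (u s ^ 2 - u a ^ 2) / s ^ 2) + u a ^ 2 / a) := by
  have hv := memLp_div_restrict_Ioi ha hu hu' hC
  have hsq : ∫ t in Ioi a, (u t / t) ^ 2
      = (∫ s in Ioi a, (u s ^ 2 - u a ^ 2) / s ^ 2) + u a ^ 2 / a := by
    have hsplit : ∀ t, (u t / t) ^ 2 = (u t ^ 2 - u a ^ 2) / t ^ 2 + u a ^ 2 / t ^ 2 := fun t => by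
      rw [div_pow, ← add_div, sub_add_cancel]
    have hint : IntegrableOn (fun t => (u t ^ 2 - u a ^ 2) / t ^ 2) (Ioi a) :=
      (hv.integrable_sq.sub (integrableOn_Ioi_div_sq ha (u a ^ 2))).congr
        (Eventually.of_forall fun t => by simp only [Pi.sub_apply, hsplit]; ring)
    simp only [hsplit]
    rw [integral_add hint (integrableOn_Ioi_div_sq ha (u a ^ 2)), integral_Ioi_div_sq ha]
  have hCS := sq_integral_mul_le hu' hv
  rw [hsq] at hCS
  calc (∫ s in Ioi a, (u s ^ 2 - u a ^ 2) / s ^ 2) ^ 2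
      = 4 * (∫ t in Ioi a, u' t * (u t / t)) ^ 2 := by
        rw [setIntegral_Ioi_sq_sub_div_sq_eq ha hu hu' hv]; ring
    _ ≤ 4 * ((∫ s in Ioi a, u' s ^ 2) *
          ((∫ s in Ioi a, (u s ^ 2 - u a ^ 2) / s ^ 2) + u a ^ 2 / a)) := by gcongr
    _ = _ := by ring

theorem intervalIntegrable_of_sub_eq_integral {u u' : ℝ → ℝ} {a L : ℝ}
    (hftc : ∀ b, a ≤ b → u b - u a = ∫ t in a..b, u' t) (hlim : Tendsto u atTop (nhds L))
    (hL : u a ≠ L) {b : ℝ} (hb : a ≤ b) : IntervalIntegrable u' volume a b := by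
  obtain ⟨B, hBb, hB⟩ := ((eventually_ge_atTop b).and (hlim.eventually_ne hL.symm)).exists
  have hint : IntervalIntegrable u' volume a B := by
    -- otherwise `∫ t in a..B, u' t` would be the junk value `0`
    by_contra hnot
    have h := hftc B (hb.trans hBb)
    rw [intervalIntegral.integral_undef hnot, sub_eq_zero] at h
    exact hB h
  exact hint.mono_set (uIcc_subset_uIcc left_mem_uIcc (mem_uIcc_of_le hb hBb))

theorem exists_pos_eq_of_tendsto {u : ℝ → ℝ} {ε L : ℝ}
    (hcont : ∀ b, 0 ≤ b → ContinuousOn u (Icc 0 b)) (h0 : u 0 < ε)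
    (hlim : Tendsto u atTop (nhds L)) (hεL : ε < L) : ∃ a, 0 < a ∧ u a = ε := by
  obtain ⟨b, hb0, hb⟩ :=
    ((eventually_ge_atTop (0 : ℝ)).and (hlim.eventually (eventually_ge_nhds hεL))).exists
  obtain ⟨a, ⟨ha0, -⟩, hua⟩ := intermediate_value_Icc hb0 (hcont b hb0) ⟨h0.le, hb⟩
  exact ⟨a, ha0.lt_of_ne (by rintro rfl; exact h0.ne hua), hua⟩

theorem half_mul_div_le_of_sq_le {ε a N T D : ℝ} (ha : 0 < a) (hε : 0 < ε) (hN : 0 ≤ N)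
    (hNa : N ≤ (1 - ε ^ 2) / a) (hNT : N ^ 2 ≤ 4 * T * (N + ε ^ 2 / a))
    (hD : ε ^ 2 / a + T ≤ D) :
    1 / 2 * N / D ≤ 2 * (1 - ε ^ 2) / (1 + ε ^ 2) ^ 2 := by
  set β := ε ^ 2 / a
  have hβ : 0 < β := by positivity
  have hNβ : 0 ≤ β * (1 - ε ^ 2) - N * ε ^ 2 := by
    have : N * ε ^ 2 ≤ (1 - ε ^ 2) / a * ε ^ 2 := by gcongr
    have : (1 - ε ^ 2) / a * ε ^ 2 = β * (1 - ε ^ 2) := by simp only [β]; ring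
    linarith
  -- `(1 - ε²)(N + 2β)² - N(N + β)(1 + ε²)² = (β(1 - ε²) - Nε²)((3 + ε²)N + 4β)`
  have hfac : N * (N + β) * (1 + ε ^ 2) ^ 2 ≤ (1 - ε ^ 2) * (N + 2 * β) ^ 2 := by
    nlinarith [mul_nonneg hNβ (by positivity : (0 : ℝ) ≤ (3 + ε ^ 2) * N + 4 * β)]
  have hε1 : 0 ≤ 1 - ε ^ 2 := by nlinarith
  have hmain : N * (1 + ε ^ 2) ^ 2 ≤ 4 * (1 - ε ^ 2) * D := by
    have hNTβ : N * (1 + ε ^ 2) ^ 2 * (N + β) ≤ 4 * (1 - ε ^ 2) * (β + T) * (N + β) := by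
      have : (N + 2 * β) ^ 2 ≤ 4 * (β + T) * (N + β) := by nlinarith
      nlinarith [mul_le_mul_of_nonneg_left this hε1]
    have := le_of_mul_le_mul_right hNTβ (by positivity)
    nlinarith
  rw [div_le_div_iff₀ (by nlinarith) (by positivity)]
  nlinarith

theorem ZFK_bound_general (ε : ℝ) (hε0 : 0 < ε) (hε1 : ε < 1)
    (u u' : ℝ → ℝ) (hmono : MonotoneOn u (Ici 0))
    (hmap : ∀ s : ℝ, 0 ≤ s → u s ∈ Icc (0 : ℝ) 1)
    (h0 : u 0 = 0) (hlim : Tendsto u atTop (nhds 1))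
    (hftc : ∀ a b : ℝ, 0 ≤ a → 0 ≤ b → u b - u a = ∫ t in a..b, u' t)
    (hden : IntegrableOn (fun s => u' s ^ 2) (Ioi 0)) :
    (1 / 2) * (∫ s in Ioi (0 : ℝ), max (u s ^ 2 - ε ^ 2) 0 / s ^ 2) /
        (∫ s in Ioi (0 : ℝ), u' s ^ 2)
      ≤ 2 * (1 - ε ^ 2) / (1 + ε ^ 2) ^ 2 := by
  have hint : ∀ b, 0 ≤ b → IntervalIntegrable u' volume 0 b := fun b hb =>
    intervalIntegrable_of_sub_eq_integral (fun b hb => hftc 0 b le_rfl hb) hlim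
      (by rw [h0]; exact zero_ne_one) hb
  have hu' : MemLp u' 2 (volume.restrict (Ioi 0)) :=
    (memLp_two_iff_integrable_sq
      (aestronglyMeasurable_restrict_Ioi fun b hb => hint b hb.le)).2 hden
  obtain ⟨a, ha, hua⟩ := exists_pos_eq_of_tendsto (fun b hb =>
      continuousOn_Icc_of_sub_eq_integral hb (hint b hb) fun x hx => hftc 0 x le_rfl hx.1)
    (by rwa [h0]) hlim hε1
  have hbelow : ∀ s ∈ Ioc 0 a, u s ^ 2 - ε ^ 2 ≤ 0 := fun s hs => by
    nlinarith [hmono hs.1.le ha.le hs.2, (hmap s hs.1.le).1]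
  have habove : ∀ s ∈ Ioi a, 0 ≤ u s ^ 2 - ε ^ 2 ∧ u s ^ 2 - ε ^ 2 ≤ 1 - ε ^ 2 := fun s hs => by
    have hεu : ε ≤ u s := hua ▸ hmono ha.le (ha.trans hs).le hs.le
    constructor <;> nlinarith [(hmap s (ha.trans hs).le).2]
  have hD := sq_intervalIntegral_div_add_setIntegral_Ioi_le ha hu'
  rw [← hftc 0 a le_rfl ha.le, hua, h0, sub_zero] at hD
  have hkey := sq_setIntegral_Ioi_sq_sub_div_sq_le_four_mul ha (fun s has => hftc a s ha.le
    (ha.le.trans has)) (hu'.mono_measure (Measure.restrict_mono (Ioi_subset_Ioi ha.le) le_rfl))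
    (C := 1) fun s hs => abs_le.2
      ⟨by linarith [(hmap s (ha.trans hs).le).1], (hmap s (ha.trans hs).le).2⟩
  rw [hua] at hkey
  rw [setIntegral_Ioi_max_div_sq (f := fun s => u s ^ 2 - ε ^ 2) ha.le hbelow fun s hs =>
    (habove s hs).1]
  exact half_mul_div_le_of_sq_le ha hε0
    (setIntegral_nonneg measurableSet_Ioi fun s hs => div_nonneg (habove s hs).1 (sq_nonneg s))
    (setIntegral_Ioi_div_sq_le ha habove) hkey hD

theorem ZFK_bound (ε : ℝ) (hε0 : 0 < ε) (hε1 : ε < 1)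
    (u u' : ℝ → ℝ) (hmono : MonotoneOn u (Ici 0))
    (hmap : ∀ s : ℝ, 0 ≤ s → u s ∈ Icc (0 : ℝ) 1)
    (h0 : u 0 = 0) (hlim : Tendsto u atTop (nhds 1))
    (hftc : ∀ a b : ℝ, 0 ≤ a → 0 ≤ b → u b - u a = ∫ t in a..b, u' t)
    (hnum : IntegrableOn (fun s => max (u s ^ 2 - ε ^ 2) 0 / s ^ 2) (Ioi 0))
    (hden : IntegrableOn (fun s => u' s ^ 2) (Ioi 0))
    (hpos : 0 < ∫ s in Ioi (0 : ℝ), u' s ^ 2) :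
    (1 / 2) * (∫ s in Ioi (0 : ℝ), max (u s ^ 2 - ε ^ 2) 0 / s ^ 2) /
        (∫ s in Ioi (0 : ℝ), u' s ^ 2)
      ≤ 2 * (1 - ε ^ 2) / (1 + ε ^ 2) ^ 2 :=
  ZFK_bound_general ε hε0 hε1 u u' hmono hmap h0 hlim hftc hden
end

section
/- Let 0 < ε < 1 and φ* ∈ (0, π/2) with φ* tan φ* = (1/2)|log ε|. Define u : [0,∞) → ℝ by u(s) = s for 0 ≤ s ≤ ε, u(s) = (√ε/cos φ*)·√s·cos((1/2)cot(φ*)·log(s/ε) − φ*) for ε < s < 1/ε, and u(s) = 1 for s ≥ 1/ε. Then u is continuously differentiable on (0,∞), with u(ε)=ε, u'(ε)=1, u(1/ε)=1 and u'(1/ε)=0. -/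
/-! `u` is glued from three C¹ pieces, and a function glued at a point from two C¹ functions
with equal values and equal derivatives there is C¹. On `[ε, 1/ε]` the phase
`θ(s) = ½ cot φ · log (s/ε) - φ` runs from `-φ` to `φ`; the condition `φ tan φ = ½ |log ε|` is
exactly what makes it end at `φ`. Since the slope of the middle piece is
`(√ε / cos φ) (cos θ / 2 - ½ cot φ sin θ) / √s`, both value and slope then match the outer pieces:
slope `1` at `ε`, where `θ = -φ`, and slope `0` at `1/ε`, where `θ = φ`. -/

open Real Set Filter Topology

theorem HasDerivAt.of_nhdsLE_nhdsGE {u f g : ℝ → ℝ} {a d : ℝ} (hf : HasDerivAt f d a)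
    (hg : HasDerivAt g d a) (huf : u =ᶠ[𝓝[≤] a] f) (hug : u =ᶠ[𝓝[≥] a] g) :
    HasDerivAt u d a := by
  have hl := hf.hasDerivWithinAt.congr_of_eventuallyEq huf (huf.eq_of_nhdsWithin self_mem_Iic)
  have hr := hg.hasDerivWithinAt.congr_of_eventuallyEq hug (hug.eq_of_nhdsWithin self_mem_Ici)
  have h := hl.union hr
  rwa [Iic_union_Ici, hasDerivWithinAt_univ] at h

theorem ContinuousAt.of_nhdsLE_nhdsGE {u f g : ℝ → ℝ} {a : ℝ} (hf : ContinuousAt f a)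
    (hg : ContinuousAt g a) (huf : u =ᶠ[𝓝[≤] a] f) (hug : u =ᶠ[𝓝[≥] a] g) :
    ContinuousAt u a :=
  continuousAt_iff_continuous_left_right.2
    ⟨hf.continuousWithinAt.congr_of_eventuallyEq huf (huf.eq_of_nhdsWithin self_mem_Iic),
      hg.continuousWithinAt.congr_of_eventuallyEq hug (hug.eq_of_nhdsWithin self_mem_Ici)⟩

theorem ContDiffOn.of_eqOn_Iic_of_eqOn_Ici {U : Set ℝ} (hU : IsOpen U) {u f g : ℝ → ℝ} {a : ℝ}
    (hf : ContDiffOn ℝ 1 f U) (hg : ContDiffOn ℝ 1 g U) (huf : EqOn u f (Iic a))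
    (hug : EqOn u g (Ici a)) (hfg : deriv f a = deriv g a) : ContDiffOn ℝ 1 u U := by
  set D : ℝ → ℝ := fun x => if x ≤ a then deriv f x else deriv g x
  have hf' := hf.continuousOn_deriv_of_isOpen hU le_rfl
  have hg' := hg.continuousOn_deriv_of_isOpen hU le_rfl
  have hDf : EqOn D (deriv f) (Iic a) := fun x hx => if_pos hx
  have hDg : EqOn D (deriv g) (Ici a) := fun x hx => by
    rcases (mem_Ici.1 hx).eq_or_lt with rfl | hx
    · exact (if_pos le_rfl).trans hfg
    · exact if_neg hx.not_ge
  have hD : ∀ x ∈ U, HasDerivAt u (D x) x ∧ ContinuousAt D x := by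
    intro x hxU
    have hfx := (hf.differentiableOn one_ne_zero x hxU).differentiableAt (hU.mem_nhds hxU)
    have hgx := (hg.differentiableOn one_ne_zero x hxU).differentiableAt (hU.mem_nhds hxU)
    have hf'x := hf'.continuousAt (hU.mem_nhds hxU)
    have hg'x := hg'.continuousAt (hU.mem_nhds hxU)
    rcases lt_trichotomy x a with hxa | rfl | hxa
    · have h := Iic_mem_nhds hxa
      rw [hDf hxa.le]
      exact ⟨hfx.hasDerivAt.congr_of_eventuallyEq (huf.eventuallyEq_of_mem h),
        hf'x.congr_of_eventuallyEq (hDf.eventuallyEq_of_mem h)⟩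
    · rw [hDf self_mem_Iic]
      exact ⟨hfx.hasDerivAt.of_nhdsLE_nhdsGE (hfg ▸ hgx.hasDerivAt) huf.eventuallyEq_nhdsWithin
          hug.eventuallyEq_nhdsWithin,
        hf'x.of_nhdsLE_nhdsGE hg'x hDf.eventuallyEq_nhdsWithin hDg.eventuallyEq_nhdsWithin⟩
    · have h := Ici_mem_nhds hxa
      rw [hDg hxa.le]
      exact ⟨hgx.hasDerivAt.congr_of_eventuallyEq (hug.eventuallyEq_of_mem h),
        hg'x.congr_of_eventuallyEq (hDg.eventuallyEq_of_mem h)⟩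
  rw [← zero_add (1 : WithTop ℕ∞), contDiffOn_succ_iff_deriv_of_isOpen hU, contDiffOn_zero]
  refine ⟨fun x hx => (hD x hx).1.differentiableAt.differentiableWithinAt, by simp, ?_⟩
  have hDU : ContinuousOn D U := fun x hx => (hD x hx).2.continuousWithinAt
  exact hDU.congr fun x hx => (hD x hx).1.deriv

theorem hasDerivAt_sqrt_mul_cos_log {b : ℝ} (hb : b ≠ 0) (c φ : ℝ) {s : ℝ} (hs : 0 < s) :
    HasDerivAt (fun t => √t * cos (c * log (t / b) - φ))
      ((cos (c * log (s / b) - φ) / 2 - c * sin (c * log (s / b) - φ)) / √s) s := by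
  have hlog := ((hasDerivAt_id' s).div_const b).log (div_ne_zero hs.ne' hb)
  have hθ : HasDerivAt (fun t => c * log (t / b) - φ) (c / s) s :=
    ((hlog.const_mul c).sub_const φ).congr_deriv (by field_simp)
  refine ((hasDerivAt_sqrt hs.ne').mul hθ.cos).congr_deriv ?_
  have := sq_sqrt hs.le
  field_simp
  linear_combination (-2 * c * sin (c * log (s / b) - φ)) * this

noncomputable def midProfile (ε φ : ℝ) (s : ℝ) : ℝ :=
  √ε / cos φ * √s * cos (1 / 2 * (cos φ / sin φ) * log (s / ε) - φ)

section midProfile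

variable {ε φ : ℝ}

theorem contDiffOn_midProfile (hε : ε ≠ 0) : ContDiffOn ℝ 1 (midProfile ε φ) (Ioi 0) := by
  intro s hs
  have hs0 : s ≠ 0 := ne_of_gt hs
  have hsε : s / ε ≠ 0 := div_ne_zero hs0 hε
  exact ContDiffAt.contDiffWithinAt (by unfold midProfile; fun_prop (disch := assumption))

theorem hasDerivAt_midProfile (hε : ε ≠ 0) {s : ℝ} (hs : 0 < s) :
    HasDerivAt (midProfile ε φ) (√ε / cos φ *
      ((cos (1 / 2 * (cos φ / sin φ) * log (s / ε) - φ) / 2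
        - 1 / 2 * (cos φ / sin φ) * sin (1 / 2 * (cos φ / sin φ) * log (s / ε) - φ)) / √s)) s := by
  have h := (hasDerivAt_sqrt_mul_cos_log hε (1 / 2 * (cos φ / sin φ)) φ hs).const_mul (√ε / cos φ)
  simp only [← mul_assoc] at h
  exact h

theorem midProfile_self (hε : 0 < ε) (hcos : cos φ ≠ 0) : midProfile ε φ ε = ε := by
  have := mul_self_sqrt hε.le
  simp only [midProfile, div_self hε.ne', log_one, mul_zero, zero_sub, cos_neg]
  field_simp
  linear_combination this

theorem hasDerivAt_midProfile_self (hε : 0 < ε) (hsin : sin φ ≠ 0) (hcos : cos φ ≠ 0) :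
    HasDerivAt (midProfile ε φ) 1 ε := by
  refine (hasDerivAt_midProfile hε.ne' hε).congr_deriv ?_
  have := (sqrt_pos.2 hε).ne'
  simp only [div_self hε.ne', log_one, mul_zero, zero_sub, cos_neg, sin_neg]
  field_simp
  ring

theorem midProfile_phase_one_div (hε0 : 0 < ε) (hε1 : ε < 1) (hsin : sin φ ≠ 0) (hcos : cos φ ≠ 0)
    (heq : φ * tan φ = 1 / 2 * |log ε|) :
    1 / 2 * (cos φ / sin φ) * log (1 / ε / ε) - φ = φ := by
  have hlog : log (1 / ε / ε) = -2 * log ε := by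
    rw [div_div, ← sq, one_div, log_inv, log_pow]
    ring
  rw [abs_of_neg (log_neg hε0 hε1), tan_eq_sin_div_cos] at heq
  rw [hlog]
  linear_combination (norm := skip) (-2 * cos φ / sin φ) * heq
  field_simp
  ring

theorem midProfile_inv (hε0 : 0 < ε) (hε1 : ε < 1) (hsin : sin φ ≠ 0) (hcos : cos φ ≠ 0)
    (heq : φ * tan φ = 1 / 2 * |log ε|) : midProfile ε φ (1 / ε) = 1 := by
  have := (sqrt_pos.2 hε0).ne'
  rw [midProfile, midProfile_phase_one_div hε0 hε1 hsin hcos heq, one_div, sqrt_inv]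
  field_simp

theorem hasDerivAt_midProfile_inv (hε0 : 0 < ε) (hε1 : ε < 1) (hsin : sin φ ≠ 0)
    (hcos : cos φ ≠ 0) (heq : φ * tan φ = 1 / 2 * |log ε|) :
    HasDerivAt (midProfile ε φ) 0 (1 / ε) := by
  refine (hasDerivAt_midProfile hε0.ne' (one_div_pos.2 hε0)).congr_deriv ?_
  rw [midProfile_phase_one_div hε0 hε1 hsin hcos heq]
  field_simp
  ring

end midProfile

theorem maximizer_smoothness (ε : ℝ) (hε0 : 0 < ε) (hε1 : ε < 1)
    (φ : ℝ) (hφ : φ ∈ Ioo 0 (π / 2)) (heq : φ * Real.tan φ = (1 / 2) * |Real.log ε|)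
    (u : ℝ → ℝ)
    (hu : u = fun s : ℝ =>
      if s ≤ ε then s
      else if s < 1 / ε then
        (Real.sqrt ε / Real.cos φ) * Real.sqrt s *
          Real.cos ((1 / 2) * (Real.cos φ / Real.sin φ) * Real.log (s / ε) - φ)
      else 1) :
    ContDiffOn ℝ 1 u (Ioi 0) ∧ u ε = ε ∧ HasDerivAt u 1 ε ∧
      u (1 / ε) = 1 ∧ HasDerivAt u 0 (1 / ε) := by
  obtain ⟨hφ0, hφ1⟩ := hφ
  have hsin : sin φ ≠ 0 := (sin_pos_of_pos_of_lt_pi hφ0 (by linarith [pi_pos])).ne'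
  have hcos : cos φ ≠ 0 := (cos_pos_of_mem_Ioo ⟨by linarith, hφ1⟩).ne'
  have hε : ε < 1 / ε := hε1.trans ((one_lt_div hε0).2 hε1)
  set v : ℝ → ℝ := fun s => if s < 1 / ε then midProfile ε φ s else 1
  have huv (s : ℝ) : u s = if s ≤ ε then s else v s := congrFun hu s
  have hv_mid : EqOn v (midProfile ε φ) (Iic (1 / ε)) := fun s hs => by
    rcases (mem_Iic.1 hs).lt_or_eq with hs | rfl
    · exact if_pos hs
    · exact (if_neg (lt_irrefl _)).trans (midProfile_inv hε0 hε1 hsin hcos heq).symm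
  have hv_right : EqOn v (fun _ => 1) (Ici (1 / ε)) := fun s hs => if_neg (not_lt.2 hs)
  have hu_left : EqOn u id (Iic ε) := fun s hs => by rw [huv]; exact if_pos hs
  have hu_right : EqOn u v (Ici ε) := fun s hs => by
    rcases (mem_Ici.1 hs).eq_or_lt with rfl | hs
    · rw [huv, if_pos le_rfl, hv_mid hε.le, midProfile_self hε0 hcos]
    · rw [huv]; exact if_neg hs.not_ge
  have hv'_inv := (hasDerivAt_midProfile_inv hε0 hε1 hsin hcos heq).of_nhdsLE_nhdsGE
    (hasDerivAt_const _ _) hv_mid.eventuallyEq_nhdsWithin hv_right.eventuallyEq_nhdsWithin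
  have hv'_self := (hasDerivAt_midProfile_self hε0 hsin hcos).congr_of_eventuallyEq
    (hv_mid.eventuallyEq_of_mem (Iic_mem_nhds hε))
  have hv : ContDiffOn ℝ 1 v (Ioi 0) := .of_eqOn_Iic_of_eqOn_Ici isOpen_Ioi
    (contDiffOn_midProfile hε0.ne') contDiffOn_const hv_mid hv_right
    (by rw [(hasDerivAt_midProfile_inv hε0 hε1 hsin hcos heq).deriv, deriv_const])
  refine ⟨.of_eqOn_Iic_of_eqOn_Ici isOpen_Ioi contDiffOn_id hv hu_left hu_right
      (by rw [deriv_id, hv'_self.deriv]), hu_left self_mem_Iic,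
    (hasDerivAt_id ε).of_nhdsLE_nhdsGE hv'_self hu_left.eventuallyEq_nhdsWithin
      hu_right.eventuallyEq_nhdsWithin, (hu_right hε.le).trans (hv_right self_mem_Ici),
    hv'_inv.congr_of_eventuallyEq (hu_right.eventuallyEq_of_mem (Ici_mem_nhds hε))⟩
end

section
/- Let 0 < ε < 1, φ* ∈ (0,π/2) with φ* tan φ* = |log ε|/2, and let u be the explicit maximizer: u(s)=s on [0,ε], u(s) = (√ε/cos φ*)√s cos((1/2)cot φ* · log(s/ε) − φ*) on [ε, 1/ε], u ≡ 1 on [1/ε, ∞). Then ∫₀^∞ u'(s)² ds = ε·(2φ* + sin 2φ*)/(4 cos³φ* · sin φ*). -/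
/-!
Write `k = cot φ / 2`. Below `ε` the integrand is `1`, contributing `ε`, and above `1 / ε` it
vanishes. On `(ε, 1 / ε)` the derivative of `√s cos (k log (s / ε) - φ)` is
`sin (2φ - k log (s / ε)) / (2 sin φ √s)`, so `u'²` is a multiple of
`sin² (2φ - k log (s / ε)) / s`, whose antiderivative is
`log (s / ε) / 2 + sin (2 (2φ - k log (s / ε))) / (4k)`.
The relation `φ tan φ = |log ε| / 2` says exactly that the phase `2φ - k log (s / ε)` falls
from `2φ` to `0` on `[ε, 1 / ε]`, so that `sin² (2φ - k log (s / ε)) / s` integrates there to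
`2φ tan φ - tan φ sin 4φ / 2`.
-/

open Real Set MeasureTheory

section

variable {A a b β k φ θ s : ℝ}

theorem hasDerivAt_log_div (ha : a ≠ 0) (hs : s ≠ 0) :
    HasDerivAt (fun t => log (t / a)) (1 / s) s :=
  (((hasDerivAt_id' s).div_const a).log (div_ne_zero hs ha)).congr_deriv (by field_simp)

theorem hasDerivAt_sqrt_mul_cos_cot_mul_log (ha : a ≠ 0) (hs : 0 < s) (hφ : sin φ ≠ 0) :
    HasDerivAt (fun t => √t * cos (1 / 2 * (cos φ / sin φ) * log (t / a) - θ))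
      (sin (φ + θ - 1 / 2 * (cos φ / sin φ) * log (s / a)) / (2 * sin φ * √s)) s := by
  have hcos :=
    (((hasDerivAt_log_div ha hs.ne').const_mul (1 / 2 * (cos φ / sin φ))).sub_const θ).cos
  refine ((hasDerivAt_sqrt hs.ne').mul hcos).congr_deriv ?_
  rw [show φ + θ - 1 / 2 * (cos φ / sin φ) * log (s / a)
      = φ - (1 / 2 * (cos φ / sin φ) * log (s / a) - θ) by ring]
  generalize 1 / 2 * (cos φ / sin φ) * log (s / a) - θ = ψ
  have hsqrt : √s ^ 2 = s := sq_sqrt hs.le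
  have : 0 < √s := sqrt_pos.mpr hs
  rw [sin_sub]
  field_simp
  rw [hsqrt]
  ring

theorem eqOn_deriv_sq_mul_sqrt_mul_cos_cot_mul_log (ha : a ≠ 0) (hφ : sin φ ≠ 0) :
    EqOn
      (fun s => deriv (fun t => A * √t * cos (1 / 2 * (cos φ / sin φ) * log (t / a) - θ)) s ^ 2)
      (fun s => A ^ 2 / (4 * sin φ ^ 2) *
        (sin (φ + θ - 1 / 2 * (cos φ / sin φ) * log (s / a)) ^ 2 / s)) (Ioi 0) := by
  intro s hs
  simp_rw [mul_assoc A]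
  rw [((hasDerivAt_sqrt_mul_cos_cot_mul_log ha hs hφ).const_mul A).deriv]
  have hsqrt : √s ^ 2 = s := sq_sqrt (le_of_lt hs)
  field_simp
  rw [hsqrt]
  ring

theorem hasDerivAt_log_div_add_sin_two_mul (ha : a ≠ 0) (hs : s ≠ 0) (hk : k ≠ 0) :
    HasDerivAt (fun t => log (t / a) / 2 + sin (2 * (β - k * log (t / a))) / (4 * k))
      (sin (β - k * log (s / a)) ^ 2 / s) s := by
  have hlog := hasDerivAt_log_div ha hs
  refine ((hlog.div_const 2).add
    ((((hlog.const_mul k).const_sub β).const_mul 2).sin.div_const (4 * k))).congr_deriv ?_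
  rw [sin_sq_eq_half_sub]
  field_simp
  ring

theorem intervalIntegrable_sin_sub_mul_log_div_sq (ha : 0 < a) (hab : a ≤ b) (hk : k ≠ 0) :
    IntervalIntegrable (fun s => sin (β - k * log (s / a)) ^ 2 / s) volume a b := by
  have hderiv : ∀ x ∈ uIcc a b, HasDerivAt
      (fun t => log (t / a) / 2 + sin (2 * (β - k * log (t / a))) / (4 * k))
      (sin (β - k * log (x / a)) ^ 2 / x) x := fun x hx =>
    hasDerivAt_log_div_add_sin_two_mul ha.ne' (ha.trans_le (uIcc_of_le hab ▸ hx).1).ne' hk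
  refine intervalIntegral.intervalIntegrable_deriv_of_nonneg
    (continuousOn_of_forall_continuousAt fun x hx => (hderiv x hx).continuousAt)
    (fun x hx => hderiv x (Ioo_subset_Icc_self hx)) fun x hx => ?_
  have : 0 < x := ha.trans_le (by simpa [hab] using hx.1.le)
  positivity

theorem integral_sin_sub_mul_log_div_sq (ha : 0 < a) (hab : a ≤ b) (hk : k ≠ 0) :
    ∫ s in a..b, sin (β - k * log (s / a)) ^ 2 / s
      = log (b / a) / 2 + (sin (2 * (β - k * log (b / a))) - sin (2 * β)) / (4 * k) := by
  rw [intervalIntegral.integral_eq_sub_of_hasDerivAt (fun x hx =>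
      hasDerivAt_log_div_add_sin_two_mul ha.ne' (ha.trans_le (uIcc_of_le hab ▸ hx).1).ne' hk)
    (intervalIntegrable_sin_sub_mul_log_div_sq ha hab hk)]
  simp only [div_self ha.ne', log_one, mul_zero, sub_zero]
  ring

theorem intervalIntegrable_deriv_sq_mul_sqrt_mul_cos_cot_mul_log (ha : 0 < a) (hab : a ≤ b)
    (hsin : sin φ ≠ 0) (hcos : cos φ ≠ 0) :
    IntervalIntegrable
      (fun s => deriv (fun t => A * √t * cos (1 / 2 * (cos φ / sin φ) * log (t / a) - θ)) s ^ 2)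
      volume a b :=
  ((intervalIntegrable_sin_sub_mul_log_div_sq ha hab (by positivity)).const_mul _).congr
    ((eqOn_deriv_sq_mul_sqrt_mul_cos_cot_mul_log ha.ne' hsin).symm.mono
      (uIoc_subset_uIcc.trans (uIcc_of_le hab ▸ (Icc_subset_Ioi_iff hab).mpr ha)))

theorem integral_deriv_sq_mul_sqrt_mul_cos_cot_mul_log (ha : 0 < a) (hab : a ≤ b)
    (hsin : sin φ ≠ 0) (hcos : cos φ ≠ 0) :
    ∫ s in a..b, deriv (fun t => A * √t * cos (1 / 2 * (cos φ / sin φ) * log (t / a) - θ)) s ^ 2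
      = A ^ 2 / (4 * sin φ ^ 2) * (log (b / a) / 2 +
        (sin (2 * (φ + θ - 1 / 2 * (cos φ / sin φ) * log (b / a))) - sin (2 * (φ + θ)))
          / (4 * (1 / 2 * (cos φ / sin φ)))) := by
  rw [intervalIntegral.integral_congr
      ((eqOn_deriv_sq_mul_sqrt_mul_cos_cot_mul_log ha.ne' hsin).mono
        (uIcc_of_le hab ▸ (Icc_subset_Ioi_iff hab).mpr ha)),
    intervalIntegral.integral_const_mul, integral_sin_sub_mul_log_div_sq ha hab (by positivity)]

end

theorem integral_Ioi_deriv_sq_piecewise {f g : ℝ → ℝ} {a b C : ℝ} (ha : 0 ≤ a) (hab : a ≤ b)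
    (hf : IntervalIntegrable (fun s => deriv f s ^ 2) volume 0 a)
    (hg : IntervalIntegrable (fun s => deriv g s ^ 2) volume a b) :
    ∫ s in Ioi 0, deriv (fun s => if s ≤ a then f s else if s < b then g s else C) s ^ 2
      = (∫ s in 0..a, deriv f s ^ 2) + ∫ s in a..b, deriv g s ^ 2 := by
  set u := fun s => if s ≤ a then f s else if s < b then g s else C
  have hleft : EqOn (fun s => deriv u s ^ 2) (fun s => deriv f s ^ 2) (Ioo 0 a) := by
    intro x hx
    have : u =ᶠ[nhds x] f := by
      filter_upwards [Iio_mem_nhds hx.2] with t (ht : t < a)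
      simp [u, ht.le]
    simp only [this.deriv_eq]
  have hmid : EqOn (fun s => deriv u s ^ 2) (fun s => deriv g s ^ 2) (Ioo a b) := by
    intro x hx
    have : u =ᶠ[nhds x] g := by
      filter_upwards [Ioo_mem_nhds hx.1 hx.2] with t ht
      simp [u, ht.1, ht.2]
    simp only [this.deriv_eq]
  have hright : ∀ x ∈ Ioi b, deriv u x ^ 2 = 0 := by
    intro x hx
    have : u =ᶠ[nhds x] fun _ => C := by
      filter_upwards [Ioi_mem_nhds hx] with t (ht : b < t)
      simp [u, (hab.trans_lt ht).not_ge, ht.le.not_gt]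
    simp [this.deriv_eq]
  calc ∫ s in Ioi 0, deriv u s ^ 2
      = ∫ s in Ioc 0 b, deriv u s ^ 2 :=
        setIntegral_eq_of_subset_of_forall_sdiff_eq_zero measurableSet_Ioi Ioc_subset_Ioi_self
          fun x hx => hright x (lt_of_not_ge fun h => hx.2 ⟨hx.1, h⟩)
    _ = ∫ s in 0..b, deriv u s ^ 2 := (intervalIntegral.integral_of_le (ha.trans hab)).symm
    _ = (∫ s in 0..a, deriv u s ^ 2) + ∫ s in a..b, deriv u s ^ 2 :=
        (intervalIntegral.integral_add_adjacent_intervals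
          (hf.congr_uIoo (uIoo_of_le ha ▸ hleft.symm))
          (hg.congr_uIoo (uIoo_of_le hab ▸ hmid.symm))).symm
    _ = (∫ s in 0..a, deriv f s ^ 2) + ∫ s in a..b, deriv g s ^ 2 := by
        rw [intervalIntegral.integral_congr_Ioo_of_le ha hleft,
          intervalIntegral.integral_congr_Ioo_of_le hab hmid]

theorem maximizer_denominator (ε : ℝ) (hε0 : 0 < ε) (hε1 : ε < 1)
    (φ : ℝ) (hφ : φ ∈ Ioo 0 (π / 2)) (heq : φ * Real.tan φ = (1 / 2) * |Real.log ε|)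
    (u : ℝ → ℝ)
    (hu : u = fun s : ℝ =>
      if s ≤ ε then s
      else if s < 1 / ε then
        (Real.sqrt ε / Real.cos φ) * Real.sqrt s *
          Real.cos ((1 / 2) * (Real.cos φ / Real.sin φ) * Real.log (s / ε) - φ)
      else 1) :
    (∫ s in Ioi (0 : ℝ), (deriv u s) ^ 2)
      = ε * (2 * φ + Real.sin (2 * φ)) / (4 * Real.cos φ ^ 3 * Real.sin φ) := by
  obtain ⟨hφ0, hφπ⟩ := hφ
  have hcos : 0 < cos φ := cos_pos_of_mem_Ioo ⟨by linarith [pi_pos], hφπ⟩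
  have hsin : 0 < sin φ := sin_pos_of_pos_of_lt_pi hφ0 (by linarith [pi_pos])
  have hεb : ε ≤ 1 / ε := (hε1.trans (one_lt_one_div hε0 hε1)).le
  have hlog : log (1 / ε / ε) = 4 * φ * (sin φ / cos φ) := by
    rw [abs_of_neg (log_neg hε0 hε1), tan_eq_sin_div_cos] at heq
    rw [div_div, one_div, log_inv, log_mul hε0.ne' hε0.ne']
    linarith
  have hphase : 1 / 2 * (cos φ / sin φ) * (4 * φ * (sin φ / cos φ)) = 2 * φ := by
    field_simp
    ring
  have hleft : ∫ s in (0 : ℝ)..ε, deriv (fun s : ℝ => s) s ^ 2 = ε := by simp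
  subst hu
  rw [integral_Ioi_deriv_sq_piecewise hε0.le hεb (by simp)
      (intervalIntegrable_deriv_sq_mul_sqrt_mul_cos_cot_mul_log hε0 hεb hsin.ne' hcos.ne'),
    hleft, integral_deriv_sq_mul_sqrt_mul_cos_cot_mul_log hε0 hεb hsin.ne' hcos.ne', hlog, hphase,
    show 2 * (φ + φ - 2 * φ) = 0 by ring, sin_zero, show 2 * (φ + φ) = 2 * (2 * φ) by ring,
    sin_two_mul (2 * φ), sin_two_mul, cos_two_mul, div_pow, sq_sqrt hε0.le]
  field_simp
  ring
end

section
/- Let φ* ∈ (0, π/2) and η > 0. Then J := ∫₀^{2φ*} (cos σ + tan φ*·sin σ)^{1+η} · sin σ · exp(−σ η tan φ*) dσ ≤ 2/η. -/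
open Real Set

/-! With `b σ = cos σ + tan φ * sin σ` and `H σ = σ tan φ - log (b σ)`, the integrand equals
`b σ * sin σ * exp (-η H σ)` and `H' σ = (1 + tan² φ) sin σ / b σ`. Cauchy–Schwarz gives
`b σ ^ 2 ≤ 1 + tan² φ`, so the integrand is at most `exp (-η H) H'`, whose integral is at most
`exp (-η H 0) / η = 1 / η`. -/

theorem integral_le_of_le_exp_neg_mul_comp_mul_deriv {g f f' : ℝ → ℝ}
    {a b η : ℝ} (hab : a ≤ b) (hη : 0 < η) (hf : ∀ x ∈ Icc a b, HasDerivAt f (f' x) x)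
    (hf' : ContinuousOn f' (Icc a b)) (hg : IntervalIntegrable g MeasureTheory.volume a b)
    (hgf : ∀ x ∈ Icc a b, g x ≤ exp (-η * f x) * f' x) :
    ∫ x in a..b, g x ≤ exp (-η * f a) / η := by
  rw [← uIcc_of_le hab] at hf hf'
  have hderiv : ∀ x ∈ uIcc a b,
      HasDerivAt (fun x ↦ -exp (-η * f x) / η) (exp (-η * f x) * f' x) x := fun x hx ↦ by
    refine ((((hf x hx).const_mul (-η)).exp.neg).div_const η).congr_deriv ?_
    field_simp
  have hcont : ContinuousOn (fun x ↦ exp (-η * f x) * f' x) (uIcc a b) :=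
    ((HasDerivAt.continuousOn hf).const_smul (-η)).rexp.mul hf'
  calc ∫ x in a..b, g x ≤ ∫ x in a..b, exp (-η * f x) * f' x :=
        intervalIntegral.integral_mono_on hab hg hcont.intervalIntegrable hgf
    _ = (exp (-η * f a) - exp (-η * f b)) / η := by
        rw [intervalIntegral.integral_eq_sub_of_hasDerivAt hderiv hcont.intervalIntegrable]
        ring
    _ ≤ exp (-η * f a) / η := by gcongr; linarith [exp_pos (-η * f b)]

theorem sq_cos_add_mul_sin_le (t σ : ℝ) : (cos σ + t * sin σ) ^ 2 ≤ 1 + t ^ 2 := by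
  nlinarith [sq_nonneg (t * cos σ - sin σ), sin_sq_add_cos_sq σ]

theorem cos_add_tan_mul_sin {φ : ℝ} (hφ : cos φ ≠ 0) (σ : ℝ) :
    cos σ + tan φ * sin σ = cos (σ - φ) / cos φ := by
  rw [cos_sub, tan_eq_sin_div_cos]
  field_simp

theorem cos_add_tan_mul_sin_pos {φ σ : ℝ} (hφ : φ ∈ Ioo 0 (π / 2)) (hσ : σ ∈ Icc 0 (2 * φ)) :
    0 < cos σ + tan φ * sin σ := by
  have hcosφ : 0 < cos φ := cos_pos_of_mem_Ioo ⟨by linarith [hφ.1, pi_pos], hφ.2⟩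
  rw [cos_add_tan_mul_sin hcosφ.ne']
  exact div_pos (cos_pos_of_mem_Ioo ⟨by linarith [hσ.1, hφ.2], by linarith [hσ.2, hφ.2]⟩) hcosφ

theorem hasDerivAt_mul_sub_log_cos_add_mul_sin {t σ : ℝ} (hσ : cos σ + t * sin σ ≠ 0) :
    HasDerivAt (fun x ↦ x * t - log (cos x + t * sin x))
      ((1 + t ^ 2) * sin σ / (cos σ + t * sin σ)) σ := by
  have hb : HasDerivAt (fun x ↦ cos x + t * sin x) (-sin σ + t * cos σ) σ :=
    (hasDerivAt_cos σ).add ((hasDerivAt_sin σ).const_mul t)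
  refine (((hasDerivAt_id σ).mul_const t).sub (hb.log hσ)).congr_deriv ?_
  field_simp
  ring

theorem rpow_one_add_mul_sin_mul_exp_le {t η σ : ℝ} (hb : 0 < cos σ + t * sin σ)
    (hs : 0 ≤ sin σ) :
    (cos σ + t * sin σ) ^ (1 + η) * sin σ * exp (-σ * η * t) ≤
      exp (-η * (σ * t - log (cos σ + t * sin σ))) *
        ((1 + t ^ 2) * sin σ / (cos σ + t * sin σ)) := by
  set b := cos σ + t * sin σ
  have hexp : b ^ η * exp (-σ * η * t) = exp (-η * (σ * t - log b)) := by
    rw [rpow_def_of_pos hb, ← exp_add]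
    ring_nf
  have hsq : b * sin σ ≤ (1 + t ^ 2) * sin σ / b := by
    rw [le_div_iff₀ hb]
    nlinarith [sq_cos_add_mul_sin_le t σ]
  calc b ^ (1 + η) * sin σ * exp (-σ * η * t)
      = exp (-η * (σ * t - log b)) * (b * sin σ) := by
        rw [← hexp, rpow_add hb, rpow_one]; ring
    _ ≤ exp (-η * (σ * t - log b)) * ((1 + t ^ 2) * sin σ / b) := by gcongr

theorem J_bound (φ η : ℝ) (hφ : φ ∈ Ioo 0 (π / 2)) (hη : 0 < η) :
    (∫ σ in (0 : ℝ)..(2 * φ),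
        (Real.cos σ + Real.tan φ * Real.sin σ) ^ (1 + η) * Real.sin σ *
          Real.exp (-σ * η * Real.tan φ))
      ≤ 2 / η := by
  set t := tan φ
  have h2φ : 0 ≤ 2 * φ := by linarith [hφ.1]
  have hb : ∀ σ ∈ Icc 0 (2 * φ), 0 < cos σ + t * sin σ := fun σ hσ ↦
    cos_add_tan_mul_sin_pos hφ hσ
  have hsin : ∀ σ ∈ Icc 0 (2 * φ), 0 ≤ sin σ := fun σ hσ ↦
    sin_nonneg_of_nonneg_of_le_pi hσ.1 (by linarith [hσ.2, hφ.2])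
  have hH' : ContinuousOn (fun σ ↦ (1 + t ^ 2) * sin σ / (cos σ + t * sin σ)) (Icc 0 (2 * φ)) :=
    ContinuousOn.div (by fun_prop) (by fun_prop) fun σ hσ ↦ (hb σ hσ).ne'
  have hJ : ContinuousOn (fun σ ↦ (cos σ + t * sin σ) ^ (1 + η) * sin σ * exp (-σ * η * t))
      (Icc 0 (2 * φ)) :=
    ContinuousOn.mul (ContinuousOn.mul
      ((ContinuousOn.rpow_const (by fun_prop) fun _ _ ↦ Or.inr (by linarith))) (by fun_prop))
      (by fun_prop)
  calc _ ≤ exp (-η * (0 * t - log (cos 0 + t * sin 0))) / η :=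
        integral_le_of_le_exp_neg_mul_comp_mul_deriv
          (f := fun σ ↦ σ * t - log (cos σ + t * sin σ)) h2φ hη
          (fun σ hσ ↦ hasDerivAt_mul_sub_log_cos_add_mul_sin (hb σ hσ).ne') hH'
          (hJ.intervalIntegrable_of_Icc h2φ)
          fun σ hσ ↦ rpow_one_add_mul_sin_mul_exp_le (hb σ hσ) (hsin σ hσ)
    _ = 1 / η := by simp
    _ ≤ 2 / η := by gcongr; norm_num
end
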